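/- arXiv:1802.09223 — 4 statements merged into one kernel-verified Lean document; each statement's English description precedes it below -/
import Mathlib

section
/- Let 𝔤 be a finite-dimensional Lie algebra over an algebraically closed field k, viewed with the Zariski topology on 𝔤 × 𝔤. If X ⊆ 𝔤 is a subvariety and C ⊆ C₂(𝔤) ∩ (X × 𝔤) is a closed subset stable under the k×-action α·(x,y) = (x, αy), then the image pr₁(C) under the first projection is closed in X. -/
/-- The Zariski topology on a `k`-vector space `V`: the closed sets are the common zero
loci of families of polynomial functions on `V`, i.e. of elements of the `k`-subalgebra of
functions `V → k` generated by the linear functionals. -/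
noncomputable def zariski (k V : Type*) [CommRing k] [AddCommGroup V] [Module k V] :
    TopologicalSpace V :=
  TopologicalSpace.generateFrom
    {U | ∃ f ∈ Algebra.adjoin k {g : V → k | IsLinearMap k g}, U = {v | f v ≠ 0}}

/-- The commuting variety of a Lie algebra. -/
def commSet (L : Type*) [LieRing L] : Set (L × L) := {p | ⁅p.1, p.2⁆ = 0}

section aux
variable {k V W : Type*} [Field k] [AddCommGroup V] [Module k V]
  [AddCommGroup W] [Module k W]

/-- The nonvanishing loci of polynomial functions form a topological basis for the
Zariski topology (they are closed under intersection via products). -/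
lemma zariski_basis :
    @TopologicalSpace.IsTopologicalBasis V (zariski k V)
      {U | ∃ f ∈ Algebra.adjoin k {g : V → k | IsLinearMap k g}, U = {v | f v ≠ 0}} := by
  letI := zariski k V
  refine ⟨?_, ?_, rfl⟩
  · rintro _ ⟨f, hf, rfl⟩ _ ⟨g, hg, rfl⟩ x ⟨hx1, hx2⟩
    refine ⟨{v | (f * g) v ≠ 0}, ⟨f * g, mul_mem hf hg, rfl⟩, ?_, ?_⟩
    · exact mul_ne_zero hx1 hx2
    · intro v hv
      exact ⟨left_ne_zero_of_mul hv, right_ne_zero_of_mul hv⟩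
  · refine Set.eq_univ_of_forall fun v => ?_
    exact Set.mem_sUnion.2 ⟨{w | (1 : V → k) w ≠ 0}, ⟨1, one_mem _, rfl⟩, one_ne_zero⟩

/-- Characterization of closure in the Zariski topology. -/
lemma zariski_mem_closure {s : Set V} {a : V} :
    a ∈ @closure V (zariski k V) s ↔
      ∀ f ∈ Algebra.adjoin k {g : V → k | IsLinearMap k g}, f a ≠ 0 →
        ∃ v ∈ s, f v ≠ 0 := by
  letI := zariski k V
  rw [zariski_basis.mem_closure_iff]
  constructor
  · intro h f hf hfa
    obtain ⟨v, hv, hvs⟩ := h {v | f v ≠ 0} ⟨f, hf, rfl⟩ hfa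
    exact ⟨v, hvs, hv⟩
  · rintro h _ ⟨f, hf, rfl⟩ ha
    obtain ⟨v, hvs, hv⟩ := h f hf ha
    exact ⟨v, hv, hvs⟩

/-- Composing a polynomial function with a linear map yields a polynomial function. -/
lemma comp_linear_mem {j : W → V} (hj : IsLinearMap k j)
    {f : V → k} (hf : f ∈ Algebra.adjoin k {g : V → k | IsLinearMap k g}) :
    (f ∘ j) ∈ Algebra.adjoin k {g : W → k | IsLinearMap k g} := by
  induction hf using Algebra.adjoin_induction with
  | mem g hg => exact Algebra.subset_adjoin ⟨fun x y => by simp [hg.1, hj.1],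
      fun c x => by simp [hg.2, hj.2]⟩
  | algebraMap r => exact Subalgebra.algebraMap_mem _ r
  | add x y hx hy ihx ihy => exact add_mem ihx ihy
  | mul x y hx hy ihx ihy => exact mul_mem ihx ihy

/-- Linear maps are continuous for the Zariski topologies. -/
lemma zariski_continuous {j : W → V} (hj : IsLinearMap k j) :
    @Continuous W V (zariski k W) (zariski k V) j := by
  letI := zariski k W
  rw [zariski, zariski, continuous_generateFrom_iff]
  rintro _ ⟨f, hf, rfl⟩
  have : j ⁻¹' {v | f v ≠ 0} = {w | (f ∘ j) w ≠ 0} := rfl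
  rw [this]
  exact TopologicalSpace.isOpen_generateFrom_of_mem ⟨f ∘ j, comp_linear_mem hj hf, rfl⟩

/-- The restriction of a polynomial function to a line is a polynomial in the parameter. -/
lemma exists_poly {f : V → k}
    (hf : f ∈ Algebra.adjoin k {g : V → k | IsLinearMap k g}) (v w : V) :
    ∃ P : Polynomial k, ∀ α : k, f (v + α • w) = P.eval α := by
  induction hf using Algebra.adjoin_induction with
  | mem g hg =>
      refine ⟨Polynomial.C (g v) + Polynomial.X * Polynomial.C (g w), fun α => ?_⟩
      rw [hg.1, hg.2, Polynomial.eval_add, Polynomial.eval_C, Polynomial.eval_mul,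
        Polynomial.eval_X, Polynomial.eval_C, smul_eq_mul]
  | algebraMap r =>
      refine ⟨Polynomial.C r, fun α => ?_⟩
      rw [Polynomial.eval_C]
      rfl
  | add x y hx hy ihx ihy =>
      obtain ⟨P, hP⟩ := ihx; obtain ⟨Q, hQ⟩ := ihy
      exact ⟨P + Q, fun α => by simp [hP α, hQ α]⟩
  | mul x y hx hy ihx ihy =>
      obtain ⟨P, hP⟩ := ihx; obtain ⟨Q, hQ⟩ := ihy
      exact ⟨P * Q, fun α => by simp [hP α, hQ α]⟩

end aux

/-- if `X ⊆ 𝔤` is a subvariety and `C ⊆ C₂(𝔤) ∩ (X × 𝔤)` is a closed subset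
(of `C₂(𝔤) ∩ (X × 𝔤)`, i.e. relatively closed) which is stable under the `k^×`-action
`α·(x,y) = (x, αy)`, then `pr₁(C)` is closed in `X`. -/
theorem pr1_image_closed (k L : Type*) [Field k] [IsAlgClosed k]
    [LieRing L] [LieAlgebra k L] [Module.Finite k L]
    (X : Set L) (C : Set (L × L))
    (hC : C ⊆ commSet L ∩ (X ×ˢ (Set.univ : Set L)))
    (hclosed : @closure _ (zariski k (L × L)) C ∩ (commSet L ∩ (X ×ˢ (Set.univ : Set L))) ⊆ C)
    (hstable : ∀ α : k, α ≠ 0 → ∀ p ∈ C, (p.1, α • p.2) ∈ C) :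
    @closure _ (zariski k L) (Prod.fst '' C) ∩ X ⊆ Prod.fst '' C := by
  classical
  letI tL := zariski k L
  letI tLL := zariski k (L × L)
  -- Step 1: every p ∈ C has (p.1, 0) ∈ closure C, since the orbit {(p.1, α•p.2)} ⊆ C
  -- and a polynomial nonvanishing at (p.1, 0) is nonzero on the line, hence (k being
  -- infinite) nonvanishing at some α ≠ 0.
  have step1 : ∀ p ∈ C, ((p.1, (0 : L)) : L × L) ∈ @closure _ (zariski k (L × L)) C := by
    intro p hp
    rw [zariski_mem_closure]
    intro f hf hf0
    obtain ⟨P, hP⟩ := exists_poly hf (p.1, (0 : L)) ((0 : L), p.2)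
    have hsimp : ∀ α : k, ((p.1, (0:L)) + α • ((0:L), p.2)) = (p.1, α • p.2) := by
      intro α; simp [Prod.ext_iff]
    have hP0 : P.eval 0 ≠ 0 := by
      rw [← hP 0]; simpa using hf0
    have hPne : P ≠ 0 := fun h => hP0 (by simp [h])
    have hfin : ({α : k | P.IsRoot α} ∪ {0}).Finite :=
      (Polynomial.finite_setOf_isRoot hPne).union (Set.finite_singleton 0)
    obtain ⟨α, -, hα⟩ := (Set.infinite_univ (α := k)).exists_notMem_finite hfin
    simp only [Set.mem_union, Set.mem_setOf_eq, Set.mem_singleton_iff, not_or] at hα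
    refine ⟨(p.1, α • p.2), hstable α hα.2 p hp, ?_⟩
    have := hP α
    rw [hsimp α] at this
    rw [this]
    exact hα.1
  -- Step 2: the map x ↦ (x, 0) is linear, hence Zariski-continuous; pulling back the
  -- closure of C gives a closed set containing pr₁(C), hence containing its closure.
  have hj : IsLinearMap k (fun x : L => ((x, (0 : L)) : L × L)) :=
    ⟨fun x y => by simp [Prod.ext_iff], fun c x => by simp [Prod.ext_iff]⟩
  have hcont := zariski_continuous (k := k) hj
  rintro x ⟨hx1, hx2⟩
  have hxcl : ((x, (0 : L)) : L × L) ∈ @closure _ (zariski k (L × L)) C := by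
    have hsub : Prod.fst '' C ⊆ (fun x : L => ((x, (0:L)) : L × L)) ⁻¹'
        (@closure _ (zariski k (L × L)) C) := by
      rintro _ ⟨p, hp, rfl⟩
      exact step1 p hp
    have hcl : IsClosed ((fun x : L => ((x, (0:L)) : L × L)) ⁻¹'
        (@closure _ (zariski k (L × L)) C)) :=
      (isClosed_closure).preimage hcont
    exact closure_minimal hsub hcl hx1
  -- Step 3: (x, 0) lies in C₂(𝔤) ∩ (X × 𝔤), so by relative closedness it lies in C.
  have hmem : ((x, (0 : L)) : L × L) ∈ C := by
    apply hclosed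
    refine ⟨hxcl, ?_, ⟨hx2, trivial⟩⟩
    simp [commSet]
  exact ⟨(x, 0), hmem, rfl⟩
end

section
/- Let 𝔤 be a finite-dimensional Lie algebra. For every irreducible component C of the commuting variety C₂(𝔤), the swap map (x,y) ↦ (y,x) maps C onto an irreducible component, and since GL₂(k) is connected, C is GL₂(k)-stable; consequently both projections pr₁(C) and pr₂(C) are closed subsets of 𝔤. -/
open TopologicalSpace Set Topology

/-- `C` is an irreducible component of `Z` (w.r.t. the topology `t`): a maximal
irreducible subset of `Z`. -/
def IsIrrCompIn {X : Type*} (t : TopologicalSpace X) (Z C : Set X) : Prop :=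
  C ⊆ Z ∧ @IsIrreducible X t C ∧
    ∀ D : Set X, D ⊆ Z → @IsIrreducible X t D → C ⊆ D → C = D

section Zar

variable {k : Type*} [Field k]
variable {V W : Type*} [AddCommGroup V] [Module k V] [AddCommGroup W] [Module k W]

private lemma const_mem (r : k) :
    (fun _ : V => r) ∈ Algebra.adjoin k {g : V → k | IsLinearMap k g} :=
  Subalgebra.algebraMap_mem _ r

private lemma comp_mem {T : V → W}
    (hT : ∀ ℓ : W → k, IsLinearMap k ℓ →
      (fun v => ℓ (T v)) ∈ Algebra.adjoin k {g : V → k | IsLinearMap k g})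
    {f : W → k} (hf : f ∈ Algebra.adjoin k {g : W → k | IsLinearMap k g}) :
    (fun v => f (T v)) ∈ Algebra.adjoin k {g : V → k | IsLinearMap k g} := by
  induction hf using Algebra.adjoin_induction with
  | mem g hg => exact hT g hg
  | algebraMap r => exact const_mem r
  | add x y hx hy ihx ihy => exact add_mem ihx ihy
  | mul x y hx hy ihx ihy => exact mul_mem ihx ihy

private lemma zar_cont {T : V → W}
    (hT : ∀ ℓ : W → k, IsLinearMap k ℓ →
      (fun v => ℓ (T v)) ∈ Algebra.adjoin k {g : V → k | IsLinearMap k g}) :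
    Continuous[zariski k V, zariski k W] T := by
  rw [show zariski k W = generateFrom
      {U | ∃ f ∈ Algebra.adjoin k {g : W → k | IsLinearMap k g}, U = {v | f v ≠ 0}} from rfl]
  refine continuous_generateFrom_iff.mpr ?_
  rintro U ⟨f, hf, rfl⟩
  exact isOpen_generateFrom_of_mem ⟨fun v => f (T v), comp_mem hT hf, rfl⟩

private lemma hT_linear {T : V → W} (h : IsLinearMap k T) :
    ∀ ℓ : W → k, IsLinearMap k ℓ →
      (fun v => ℓ (T v)) ∈ Algebra.adjoin k {g : V → k | IsLinearMap k g} :=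
  fun ℓ hℓ => Algebra.subset_adjoin ⟨fun x y => by rw [h.map_add, hℓ.map_add],
    fun c x => by rw [h.map_smul, hℓ.map_smul]⟩

private lemma line_poly {f : V → k}
    (hf : f ∈ Algebra.adjoin k {g : V → k | IsLinearMap k g}) (v d : V) :
    ∃ P : Polynomial k, ∀ t : k, f (v + t • d) = P.eval t := by
  induction hf using Algebra.adjoin_induction with
  | mem g hg =>
      refine ⟨Polynomial.C (g v) + Polynomial.C (g d) * Polynomial.X, fun t => ?_⟩
      rw [hg.map_add, hg.map_smul]
      simp [smul_eq_mul]
      ring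
  | algebraMap r => exact ⟨Polynomial.C r, fun t => by simp⟩
  | add x y hx hy ihx ihy =>
      obtain ⟨P, hP⟩ := ihx; obtain ⟨Q, hQ⟩ := ihy
      exact ⟨P + Q, fun t => by simp [Pi.add_apply, hP t, hQ t]⟩
  | mul x y hx hy ihx ihy =>
      obtain ⟨P, hP⟩ := ihx; obtain ⟨Q, hQ⟩ := ihy
      exact ⟨P * Q, fun t => by simp [Pi.mul_apply, hP t, hQ t]⟩

private lemma basic_inter [Infinite k] {f g : V → k}
    (hf : f ∈ Algebra.adjoin k {g : V → k | IsLinearMap k g})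
    (hg : g ∈ Algebra.adjoin k {g : V → k | IsLinearMap k g})
    {v w : V} (hv : f v ≠ 0) (hw : g w ≠ 0) :
    ∃ u : V, f u ≠ 0 ∧ g u ≠ 0 := by
  obtain ⟨P, hP⟩ := line_poly hf v (w - v)
  obtain ⟨Q, hQ⟩ := line_poly hg v (w - v)
  have h0 : P.eval 0 = f v := by
    have := hP 0; rw [zero_smul, add_zero] at this; exact this.symm
  have h1 : Q.eval 1 = g w := by
    have := hQ 1
    rw [one_smul, show v + (w - v) = w by abel] at this
    exact this.symm
  have hPne : P ≠ 0 := by intro h; rw [h, Polynomial.eval_zero] at h0; exact hv h0.symm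
  have hQne : Q ≠ 0 := by intro h; rw [h, Polynomial.eval_zero] at h1; exact hw h1.symm
  obtain ⟨t, ht⟩ : ∃ t, (P * Q).eval t ≠ 0 := by
    by_contra hcon
    push_neg at hcon
    exact mul_ne_zero hPne hQne
      (Polynomial.funext fun r => by rw [hcon r, Polynomial.eval_zero])
  refine ⟨v + t • (w - v), ?_, ?_⟩
  · rw [hP t]; intro h; exact ht (by rw [Polynomial.eval_mul, h, zero_mul])
  · rw [hQ t]; intro h; exact ht (by rw [Polynomial.eval_mul, h, mul_zero])

private lemma zar_basis :
    @IsTopologicalBasis V (zariski k V)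
      {U | ∃ f ∈ Algebra.adjoin k {g : V → k | IsLinearMap k g}, U = {v | f v ≠ 0}} := by
  letI := zariski k V
  have hinter : ∀ ⦃s : Set V⦄,
      s ∈ {U | ∃ f ∈ Algebra.adjoin k {g : V → k | IsLinearMap k g}, U = {v | f v ≠ 0}} →
      ∀ ⦃t : Set V⦄,
      t ∈ {U | ∃ f ∈ Algebra.adjoin k {g : V → k | IsLinearMap k g}, U = {v | f v ≠ 0}} →
      s ∩ t ∈ {U | ∃ f ∈ Algebra.adjoin k {g : V → k | IsLinearMap k g}, U = {v | f v ≠ 0}} := by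
    rintro _ ⟨f, hf, rfl⟩ _ ⟨g, hg, rfl⟩
    exact ⟨f * g, mul_mem hf hg, by ext v; simp [mul_ne_zero_iff, and_comm]⟩
  have h := isTopologicalBasis_of_subbasis_of_inter rfl hinter
  rwa [Set.insert_eq_of_mem] at h
  exact ⟨1, one_mem _, by ext v; simp⟩

private lemma univ_irred [Infinite k] : @IsIrreducible V (zariski k V) Set.univ := by
  letI := zariski k V
  refine ⟨⟨0, trivial⟩, fun U₁ U₂ h₁ h₂ hne₁ hne₂ => ?_⟩
  obtain ⟨x, -, hx⟩ := hne₁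
  obtain ⟨y, -, hy⟩ := hne₂
  obtain ⟨B₁, ⟨f, hf, rfl⟩, hxB, hBU₁⟩ := zar_basis.exists_subset_of_mem_open hx h₁
  obtain ⟨B₂, ⟨g, hg, rfl⟩, hyB, hBU₂⟩ := zar_basis.exists_subset_of_mem_open hy h₂
  obtain ⟨u, hu1, hu2⟩ := basic_inter hf hg hxB hyB
  exact ⟨u, trivial, hBU₁ hu1, hBU₂ hu2⟩

private lemma cont_mk_left (a : V) :
    Continuous[zariski k W, zariski k (V × W)] (fun b => ((a, b) : V × W)) := by
  apply zar_cont
  intro ℓ hℓ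
  have : (fun b : W => ℓ (a, b)) =
      (fun _ : W => ℓ (a, 0)) + fun b : W => ℓ (0, b) := by
    funext b
    show ℓ (a, b) = ℓ (a, 0) + ℓ (0, b)
    rw [← hℓ.map_add]; congr 1; simp
  rw [this]
  exact add_mem (const_mem _) (Algebra.subset_adjoin
    ⟨fun x y => by rw [← hℓ.map_add]; congr 1; simp,
     fun c x => by rw [← hℓ.map_smul]; congr 1; simp⟩)

private lemma cont_mk_right (b : W) :
    Continuous[zariski k V, zariski k (V × W)] (fun a => ((a, b) : V × W)) := by
  apply zar_cont
  intro ℓ hℓ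
  have : (fun a : V => ℓ (a, b)) =
      (fun a : V => ℓ (a, 0)) + fun _ : V => ℓ (0, b) := by
    funext a
    show ℓ (a, b) = ℓ (a, 0) + ℓ (0, b)
    rw [← hℓ.map_add]; congr 1; simp
  rw [this]
  exact add_mem (Algebra.subset_adjoin
    ⟨fun x y => by rw [← hℓ.map_add]; congr 1; simp,
     fun c x => by rw [← hℓ.map_smul]; congr 1; simp⟩) (const_mem _)

private lemma prod_irred [Infinite k] {A : Set V} {B : Set W}
    (hA : @IsIrreducible V (zariski k V) A) (hB : @IsIrreducible W (zariski k W) B) :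
    @IsIrreducible (V × W) (zariski k (V × W)) (A ×ˢ B) := by
  letI tV := zariski k V
  letI tW := zariski k W
  letI tP : TopologicalSpace (V × W) := zariski k (V × W)
  obtain ⟨⟨a₀, ha₀⟩, hAp⟩ := hA
  obtain ⟨⟨b₀, hb₀⟩, hBp⟩ := hB
  refine ⟨⟨(a₀, b₀), ha₀, hb₀⟩, ?_⟩
  rw [isPreirreducible_iff_isClosed_union_isClosed]
  intro z₁ z₂ hz₁ hz₂ hsub
  have hA₁ : @IsClosed V tV {a | ∀ b ∈ B, (a, b) ∈ z₁} := by
    have : {a | ∀ b ∈ B, (a, b) ∈ z₁} = ⋂ b ∈ B, (fun a => ((a, b) : V × W)) ⁻¹' z₁ := by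
      ext a; simp
    rw [this]
    exact isClosed_biInter fun b _ => hz₁.preimage (cont_mk_right b)
  have hA₂ : @IsClosed V tV {a | ∀ b ∈ B, (a, b) ∈ z₂} := by
    have : {a | ∀ b ∈ B, (a, b) ∈ z₂} = ⋂ b ∈ B, (fun a => ((a, b) : V × W)) ⁻¹' z₂ := by
      ext a; simp
    rw [this]
    exact isClosed_biInter fun b _ => hz₂.preimage (cont_mk_right b)
  have key : A ⊆ {a | ∀ b ∈ B, (a, b) ∈ z₁} ∪ {a | ∀ b ∈ B, (a, b) ∈ z₂} := by
    intro a ha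
    have hsl : @IsIrreducible (V × W) tP ((fun b => ((a, b) : V × W)) '' B) :=
      IsIrreducible.image ⟨⟨b₀, hb₀⟩, hBp⟩ _ (cont_mk_left a).continuousOn
    have hsub' : ((fun b => ((a, b) : V × W)) '' B) ⊆ z₁ ∪ z₂ := by
      rintro _ ⟨b, hb, rfl⟩; exact hsub ⟨ha, hb⟩
    rcases (isPreirreducible_iff_isClosed_union_isClosed.mp hsl.2) z₁ z₂ hz₁ hz₂ hsub' with h | h
    · exact Or.inl fun b hb => h ⟨b, hb, rfl⟩
    · exact Or.inr fun b hb => h ⟨b, hb, rfl⟩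
  rcases (isPreirreducible_iff_isClosed_union_isClosed.mp hAp) _ _ hA₁ hA₂ key with h | h
  · exact Or.inl (by rintro ⟨x, y⟩ ⟨hx, hy⟩; exact h hx y hy)
  · exact Or.inr (by rintro ⟨x, y⟩ ⟨hx, hy⟩; exact h hx y hy)


private lemma irr_image {X Y : Type*} (tX : TopologicalSpace X) (tY : TopologicalSpace Y)
    {s : Set X} (hs : @IsIrreducible X tX s) (f : X → Y) (hf : @Continuous X Y tX tY f) :
    @IsIrreducible Y tY (f '' s) := by
  letI := tX; letI := tY
  exact hs.image f hf.continuousOn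

private lemma closed_preimage {X Y : Type*} (tX : TopologicalSpace X) (tY : TopologicalSpace Y)
    {s : Set Y} (f : X → Y) (hf : @Continuous X Y tX tY f) (hs : @IsClosed Y tY s) :
    @IsClosed X tX (f ⁻¹' s) := by
  letI := tX; letI := tY
  exact hs.preimage hf

private lemma cont_comp {X Y Z : Type*} (tX : TopologicalSpace X) (tY : TopologicalSpace Y)
    (tZ : TopologicalSpace Z) {f : X → Y} {g : Y → Z}
    (hg : @Continuous Y Z tY tZ g) (hf : @Continuous X Y tX tY f) :
    @Continuous X Z tX tZ (fun x => g (f x)) := by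
  letI := tX; letI := tY; letI := tZ
  exact hg.comp hf

end Zar

section Lie

variable {k : Type*} [Field k] {L : Type*} [LieRing L] [LieAlgebra k L] [Module.Finite k L]

private lemma bracket_coord_mem (c : L →ₗ[k] k) :
    (fun p : L × L => c ⁅p.1, p.2⁆) ∈ Algebra.adjoin k {g : L × L → k | IsLinearMap k g} := by
  classical
  let b := Module.finBasis k L
  let D : L →ₗ[k] L →ₗ[k] k := LinearMap.mk₂ k (fun x y => c ⁅x, y⁆)
    (fun x x' y => by rw [add_lie, map_add])
    (fun t x y => by rw [smul_lie, map_smul])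
    (fun x y y' => by rw [lie_add, map_add])
    (fun t x y => by rw [lie_smul, map_smul])
  have hDb : ∀ u w : L, D u w = c ⁅u, w⁆ := fun _ _ => rfl
  have hxy : ∀ x y : L, c ⁅x, y⁆ =
      ∑ i, ∑ j, (b.repr x i) * (b.repr y j) * c ⁅b i, b j⁆ := by
    intro x y
    rw [← hDb]
    conv_lhs => rw [← b.sum_repr x, ← b.sum_repr y]
    simp only [map_sum, LinearMap.sum_apply, map_smul, LinearMap.smul_apply, Finset.smul_sum,
      Finset.mul_sum, hDb, smul_eq_mul, mul_assoc]
    rw [Finset.sum_comm]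
    exact Finset.sum_congr rfl fun i _ => Finset.sum_congr rfl fun j _ => by ring
  have hfun : (fun p : L × L => c ⁅p.1, p.2⁆) =
      ∑ i, ∑ j, c ⁅b i, b j⁆ •
        ((fun p : L × L => b.repr p.1 i) * fun p : L × L => b.repr p.2 j) := by
    funext p
    rw [hxy p.1 p.2]
    simp only [Finset.sum_apply, Pi.smul_apply, Pi.mul_apply, smul_eq_mul]
    refine Finset.sum_congr rfl fun i _ => Finset.sum_congr rfl fun j _ => ?_
    ring
  rw [hfun]
  refine Subalgebra.sum_mem _ fun i _ => Subalgebra.sum_mem _ fun j _ =>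
    Subalgebra.smul_mem _ (mul_mem ?_ ?_) _
  · exact Algebra.subset_adjoin ⟨fun x y => by simp, fun t x => by simp⟩
  · exact Algebra.subset_adjoin ⟨fun x y => by simp, fun t x => by simp⟩

private lemma commSet_closed :
    @IsClosed (L × L) (zariski k (L × L)) (commSet L) := by
  letI := zariski k (L × L)
  let b := Module.finBasis k L
  have hset : commSet L = ⋂ i, {p : L × L | b.coord i ⁅p.1, p.2⁆ = 0} := by
    ext p
    simp only [commSet, Set.mem_setOf_eq, Set.mem_iInter]
    exact ⟨fun h i => by rw [h, map_zero], fun h => b.forall_coord_eq_zero_iff.mp h⟩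
  rw [hset]
  refine isClosed_iInter fun i => ?_
  have : {p : L × L | b.coord i ⁅p.1, p.2⁆ = 0} =
      {p : L × L | (fun p : L × L => b.coord i ⁅p.1, p.2⁆) p ≠ 0}ᶜ := by
    ext p; simp
  rw [this]
  exact IsOpen.isClosed_compl
    (isOpen_generateFrom_of_mem ⟨_, bracket_coord_mem (b.coord i), rfl⟩)

private def psi : Matrix (Fin 2) (Fin 2) k × (L × L) → L × L :=
  fun q => (q.1 0 0 • q.2.1 + q.1 0 1 • q.2.2, q.1 1 0 • q.2.1 + q.1 1 1 • q.2.2)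

private lemma psi_cont :
    Continuous[zariski k (Matrix (Fin 2) (Fin 2) k × (L × L)), zariski k (L × L)]
      (psi (k := k) (L := L)) := by
  apply zar_cont
  intro ℓ hℓ
  have hsplit : ∀ x y : L, ℓ (x, y) = ℓ (x, 0) + ℓ (0, y) := fun x y => by
    rw [← hℓ.map_add]; congr 1; simp
  have hadd1 : ∀ u v : L, ℓ (u + v, 0) = ℓ (u, 0) + ℓ (v, 0) := fun u v => by
    rw [← hℓ.map_add]; congr 1; simp
  have hadd2 : ∀ u v : L, ℓ (0, u + v) = ℓ (0, u) + ℓ (0, v) := fun u v => by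
    rw [← hℓ.map_add]; congr 1; simp
  have hs1 : ∀ (t : k) (x : L), ℓ (t • x, 0) = t * ℓ (x, 0) := fun t x => by
    rw [show ((t • x : L), (0 : L)) = t • ((x, 0) : L × L) by simp, hℓ.map_smul, smul_eq_mul]
  have hs2 : ∀ (t : k) (x : L), ℓ (0, t • x) = t * ℓ (0, x) := fun t x => by
    rw [show ((0 : L), (t • x : L)) = t • ((0, x) : L × L) by simp, hℓ.map_smul, smul_eq_mul]
  have hfun : (fun q : Matrix (Fin 2) (Fin 2) k × (L × L) => ℓ (psi q)) =
      (fun q : Matrix (Fin 2) (Fin 2) k × (L × L) => q.1 0 0) * (fun q => ℓ (q.2.1, 0))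
      + (fun q => q.1 0 1) * (fun q => ℓ (q.2.2, 0))
      + (fun q => q.1 1 0) * (fun q => ℓ (0, q.2.1))
      + (fun q => q.1 1 1) * (fun q => ℓ (0, q.2.2)) := by
    funext q
    show ℓ (psi q) = _
    rw [show psi q = (q.1 0 0 • q.2.1 + q.1 0 1 • q.2.2,
        q.1 1 0 • q.2.1 + q.1 1 1 • q.2.2) from rfl]
    rw [hsplit, hadd1, hadd2, hs1, hs1, hs2, hs2]
    simp only [Pi.add_apply, Pi.mul_apply]
    ring
  rw [hfun]
  have g1 : ∀ i j : Fin 2, (fun q : Matrix (Fin 2) (Fin 2) k × (L × L) => q.1 i j)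
      ∈ Algebra.adjoin k {g : Matrix (Fin 2) (Fin 2) k × (L × L) → k | IsLinearMap k g} :=
    fun i j => Algebra.subset_adjoin ⟨fun x y => rfl, fun t x => rfl⟩
  have g2 : (fun q : Matrix (Fin 2) (Fin 2) k × (L × L) => ℓ (q.2.1, 0))
      ∈ Algebra.adjoin k {g : Matrix (Fin 2) (Fin 2) k × (L × L) → k | IsLinearMap k g} :=
    Algebra.subset_adjoin ⟨fun x y => hadd1 _ _, fun t x => by rw [smul_eq_mul]; exact hs1 _ _⟩
  have g3 : (fun q : Matrix (Fin 2) (Fin 2) k × (L × L) => ℓ (q.2.2, 0))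
      ∈ Algebra.adjoin k {g : Matrix (Fin 2) (Fin 2) k × (L × L) → k | IsLinearMap k g} :=
    Algebra.subset_adjoin ⟨fun x y => hadd1 _ _, fun t x => by rw [smul_eq_mul]; exact hs1 _ _⟩
  have g4 : (fun q : Matrix (Fin 2) (Fin 2) k × (L × L) => ℓ (0, q.2.1))
      ∈ Algebra.adjoin k {g : Matrix (Fin 2) (Fin 2) k × (L × L) → k | IsLinearMap k g} :=
    Algebra.subset_adjoin ⟨fun x y => hadd2 _ _, fun t x => by rw [smul_eq_mul]; exact hs2 _ _⟩
  have g5 : (fun q : Matrix (Fin 2) (Fin 2) k × (L × L) => ℓ (0, q.2.2))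
      ∈ Algebra.adjoin k {g : Matrix (Fin 2) (Fin 2) k × (L × L) → k | IsLinearMap k g} :=
    Algebra.subset_adjoin ⟨fun x y => hadd2 _ _, fun t x => by rw [smul_eq_mul]; exact hs2 _ _⟩
  exact add_mem (add_mem (add_mem (mul_mem (g1 0 0) g2) (mul_mem (g1 0 1) g3))
    (mul_mem (g1 1 0) g4)) (mul_mem (g1 1 1) g5)

private lemma psi_mem_commSet {m : Matrix (Fin 2) (Fin 2) k} {p : L × L}
    (hp : p ∈ commSet L) : psi (m, p) ∈ commSet L := by
  obtain ⟨x, y⟩ := p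
  have h1 : ⁅x, y⁆ = 0 := hp
  have h2 : ⁅y, x⁆ = 0 := by rw [← lie_skew, h1, neg_zero]
  show ⁅m 0 0 • x + m 0 1 • y, m 1 0 • x + m 1 1 • y⁆ = 0
  simp [lie_add, add_lie, lie_smul, smul_lie, h1, h2]

private lemma psi_psi (m n : Matrix (Fin 2) (Fin 2) k) (p : L × L) :
    psi (m, psi (n, p)) = psi (m * n, p) := by
  obtain ⟨x, y⟩ := p
  show (_, _) = (_, _)
  simp only [psi, Matrix.mul_apply, Fin.sum_univ_two, add_smul, smul_add, smul_smul]
  rw [Prod.mk.injEq]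
  constructor <;> module

private lemma psi_one (p : L × L) : psi ((1 : Matrix (Fin 2) (Fin 2) k), p) = p := by
  obtain ⟨x, y⟩ := p
  show (_, _) = (_, _)
  simp [psi, Matrix.one_apply]

end Lie

/-- for every irreducible component `C` of `C₂(𝔤)`, the swap map sends `C`
onto an irreducible component, `C` is `GL₂(k)`-stable, and both projections of `C` are
closed subsets of `𝔤`. -/
theorem irrComp_swap_GL2_stable_proj_closed (k L : Type*) [Field k] [IsAlgClosed k]
    [LieRing L] [LieAlgebra k L] [Module.Finite k L]
    (C : Set (L × L)) (hC : IsIrrCompIn (zariski k (L × L)) (commSet L) C) :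
    IsIrrCompIn (zariski k (L × L)) (commSet L) (Prod.swap '' C) ∧
    (∀ g : Matrix.GeneralLinearGroup (Fin 2) k,
      (fun p : L × L =>
        ((g : Matrix (Fin 2) (Fin 2) k) 0 0 • p.1 + (g : Matrix (Fin 2) (Fin 2) k) 0 1 • p.2,
         (g : Matrix (Fin 2) (Fin 2) k) 1 0 • p.1 + (g : Matrix (Fin 2) (Fin 2) k) 1 1 • p.2))
        '' C = C) ∧
    @IsClosed _ (zariski k L) (Prod.fst '' C) ∧
    @IsClosed _ (zariski k L) (Prod.snd '' C) := by
  obtain ⟨hCZ, hCirr, hCmax⟩ := hC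
  -- the saturation of C under the monoid of 2×2 matrices
  have hprod : @IsIrreducible _ (zariski k (Matrix (Fin 2) (Fin 2) k × (L × L)))
      ((Set.univ : Set (Matrix (Fin 2) (Fin 2) k)) ×ˢ C) :=
    prod_irred univ_irred hCirr
  have hEirr : @IsIrreducible _ (zariski k (L × L))
      (psi '' ((Set.univ : Set (Matrix (Fin 2) (Fin 2) k)) ×ˢ C)) :=
    irr_image _ _ hprod _ psi_cont
  have hEsub : psi '' ((Set.univ : Set (Matrix (Fin 2) (Fin 2) k)) ×ˢ C) ⊆ commSet L := by
    rintro _ ⟨⟨m, p⟩, ⟨-, hpC⟩, rfl⟩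
    exact psi_mem_commSet (hCZ hpC)
  have hCsubE : C ⊆ psi '' ((Set.univ : Set (Matrix (Fin 2) (Fin 2) k)) ×ˢ C) :=
    fun p hp => ⟨(1, p), ⟨trivial, hp⟩, psi_one p⟩
  have hCE : C = psi '' ((Set.univ : Set (Matrix (Fin 2) (Fin 2) k)) ×ˢ C) :=
    hCmax _ hEsub hEirr hCsubE
  -- swap
  have hswap_comm : ∀ p : L × L, p ∈ commSet L → Prod.swap p ∈ commSet L := by
    intro p hp
    show ⁅p.2, p.1⁆ = 0
    rw [← lie_skew, show ⁅p.1, p.2⁆ = 0 from hp, neg_zero]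
  have hswap_eq : (Prod.swap : L × L → L × L) =
      fun p : L × L => psi ((!![0, 1; 1, 0] : Matrix (Fin 2) (Fin 2) k), p) := by
    funext p
    show (p.2, p.1) = (_, _)
    simp [psi]
  have hswap_cont : Continuous[zariski k (L × L), zariski k (L × L)]
      (Prod.swap : L × L → L × L) := by
    rw [hswap_eq]
    exact cont_comp _ _ _ psi_cont (cont_mk_left _)
  have hswap_comp : IsIrrCompIn (zariski k (L × L)) (commSet L) (Prod.swap '' C) := by
    refine ⟨?_, ?_, ?_⟩
    · rintro _ ⟨p, hp, rfl⟩; exact hswap_comm p (hCZ hp)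
    · exact irr_image _ _ hCirr _ hswap_cont
    · intro D hD hDirr hsubD
      have h2 : C ⊆ Prod.swap '' D := fun p hp =>
        ⟨Prod.swap p, hsubD ⟨p, hp, rfl⟩, Prod.swap_swap p⟩
      have hDsub : Prod.swap '' D ⊆ commSet L := by
        rintro _ ⟨d, hd, rfl⟩; exact hswap_comm d (hD hd)
      have h3 : C = Prod.swap '' D :=
        hCmax _ hDsub (irr_image _ _ hDirr _ hswap_cont) h2
      rw [h3, Set.image_image]
      simp [Prod.swap_swap]
  -- GL₂ stability
  have hstab : ∀ g : Matrix.GeneralLinearGroup (Fin 2) k,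
      (fun p : L × L => psi ((g : Matrix (Fin 2) (Fin 2) k), p)) '' C = C := by
    intro g
    apply Set.Subset.antisymm
    · rintro _ ⟨p, hp, rfl⟩
      rw [hCE]
      exact ⟨((g : Matrix (Fin 2) (Fin 2) k), p), ⟨trivial, hp⟩, rfl⟩
    · intro p hp
      refine ⟨psi (((g⁻¹ : Matrix.GeneralLinearGroup (Fin 2) k) : Matrix (Fin 2) (Fin 2) k), p),
        ?_, ?_⟩
      · rw [hCE]
        exact ⟨(((g⁻¹ : Matrix.GeneralLinearGroup (Fin 2) k) : Matrix (Fin 2) (Fin 2) k), p),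
          ⟨trivial, hp⟩, rfl⟩
      · show psi ((g : Matrix (Fin 2) (Fin 2) k),
            psi (((g⁻¹ : Matrix.GeneralLinearGroup (Fin 2) k) : Matrix (Fin 2) (Fin 2) k), p)) = p
        rw [psi_psi, ← Units.val_mul, mul_inv_cancel, Units.val_one, psi_one]
  -- C is closed
  have hCclosed : @IsClosed _ (zariski k (L × L)) C := by
    letI := zariski k (L × L)
    have h1 : closure C ⊆ commSet L := closure_minimal hCZ commSet_closed
    have h2 : C = closure C := hCmax (closure C) h1 hCirr.closure subset_closure
    rw [h2]; exact isClosed_closure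
  -- projections
  have hinc1 : Continuous[zariski k L, zariski k (L × L)] (fun x : L => ((x, 0) : L × L)) :=
    zar_cont (hT_linear ⟨fun a b => by simp [Prod.ext_iff], fun c a => by simp [Prod.ext_iff]⟩)
  have hinc2 : Continuous[zariski k L, zariski k (L × L)] (fun y : L => ((0, y) : L × L)) :=
    zar_cont (hT_linear ⟨fun a b => by simp [Prod.ext_iff], fun c a => by simp [Prod.ext_iff]⟩)
  have hfst : (Prod.fst '' C) = (fun x : L => ((x, 0) : L × L)) ⁻¹' C := by
    apply Set.Subset.antisymm
    · rintro _ ⟨⟨x, y⟩, hp, rfl⟩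
      show ((x, 0) : L × L) ∈ C
      rw [hCE]
      refine ⟨((!![1, 0; 0, 0] : Matrix (Fin 2) (Fin 2) k), (x, y)), ⟨trivial, hp⟩, ?_⟩
      show (_, _) = (_, _)
      simp [psi]
    · intro x hx
      exact ⟨(x, 0), hx, rfl⟩
  have hsnd : (Prod.snd '' C) = (fun y : L => ((0, y) : L × L)) ⁻¹' C := by
    apply Set.Subset.antisymm
    · rintro _ ⟨⟨x, y⟩, hp, rfl⟩
      show ((0, y) : L × L) ∈ C
      rw [hCE]
      refine ⟨((!![0, 0; 0, 1] : Matrix (Fin 2) (Fin 2) k), (x, y)), ⟨trivial, hp⟩, ?_⟩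
      show (_, _) = (_, _)
      simp [psi]
    · intro y hy
      exact ⟨(0, y), hy, rfl⟩
  refine ⟨hswap_comp, hstab, ?_, ?_⟩
  · rw [hfst]
    exact closed_preimage _ _ _ hinc1 hCclosed
  · rw [hsnd]
    exact closed_preimage _ _ _ hinc2 hCclosed
end

section
/- Let G be a connected algebraic group acting on a Lie algebra 𝔫, and let 𝔵, 𝔶 : k → 𝔫 be morphisms and O ⊆ k a nonempty open set such that (a) [𝔵(α), 𝔶(α)] = 0 for all α ∈ k, and (b) 𝔵(α) ∈ G·𝔵(1) for all α ∈ O. Then (𝔵(0), 𝔶(0)) lies in the closure ℭ(𝔵(1)) of G·({𝔵(1)} × C_𝔫(𝔵(1))). -/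
/-- `f : k → L` is a morphism (polynomial map) of varieties: every linear functional
composed with `f` is a polynomial function. -/
def IsPolyMap (k L : Type*) [CommRing k] [AddCommGroup L] [Module k L] (f : k → L) : Prop :=
  ∀ φ : L →ₗ[k] k, ∃ p : Polynomial k, ∀ a : k, φ (f a) = Polynomial.eval a p

/-- every zariski-open set containing a point contains a basic open around it -/
lemma zariski_basic {k V : Type*} [Field k] [AddCommGroup V] [Module k V]
    {U : Set V} (hU : (zariski k V).IsOpen U) :
    ∀ v ∈ U, ∃ f ∈ Algebra.adjoin k {g : V → k | IsLinearMap k g},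
      f v ≠ 0 ∧ {w | f w ≠ 0} ⊆ U := by
  induction hU with
  | basic U hU =>
    obtain ⟨f, hf, rfl⟩ := hU
    exact fun v hv => ⟨f, hf, hv, subset_rfl⟩
  | univ =>
    intro v _
    exact ⟨1, one_mem _, one_ne_zero, Set.subset_univ _⟩
  | inter U₁ U₂ h1 h2 ih1 ih2 =>
    intro v hv
    obtain ⟨f, hf, hfv, hfU⟩ := ih1 v hv.1
    obtain ⟨g, hg, hgv, hgU⟩ := ih2 v hv.2
    refine ⟨f * g, mul_mem hf hg, mul_ne_zero hfv hgv, fun w hw => ?_⟩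
    have hw' : f w * g w ≠ 0 := hw
    exact ⟨hfU (left_ne_zero_of_mul hw'), hgU (right_ne_zero_of_mul hw')⟩
  | sUnion S hS ih =>
    intro v hv
    obtain ⟨U, hUS, hvU⟩ := hv
    obtain ⟨f, hf, hfv, hfU⟩ := ih U hUS v hvU
    exact ⟨f, hf, hfv, hfU.trans (Set.subset_sUnion_of_mem hUS)⟩

/-- composing a polynomial function on `L × L` with a pair of poly maps is polynomial -/
lemma poly_comp {k L : Type*} [Field k] [AddCommGroup L] [Module k L]
    (X Y : k → L) (hX : IsPolyMap k L X) (hY : IsPolyMap k L Y)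
    {f : L × L → k}
    (hf : f ∈ Algebra.adjoin k {g : L × L → k | IsLinearMap k g}) :
    ∃ P : Polynomial k, ∀ α : k, f (X α, Y α) = Polynomial.eval α P := by
  induction hf using Algebra.adjoin_induction with
  | mem g hg =>
    let φ : L × L →ₗ[k] k := IsLinearMap.mk' g hg
    obtain ⟨p1, hp1⟩ := hX (φ ∘ₗ LinearMap.inl k L L)
    obtain ⟨p2, hp2⟩ := hY (φ ∘ₗ LinearMap.inr k L L)
    refine ⟨p1 + p2, fun α => ?_⟩
    have : g (X α, Y α) = φ (X α, 0) + φ (0, Y α) := by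
      rw [← map_add]
      simp [φ]
    simp only [this, Polynomial.eval_add]
    rw [← hp1 α, ← hp2 α]
    rfl
  | algebraMap r => exact ⟨Polynomial.C r, fun α => by simp [Algebra.algebraMap_eq_smul_one]⟩
  | add x y hx hy ihx ihy =>
    obtain ⟨P, hP⟩ := ihx
    obtain ⟨Q, hQ⟩ := ihy
    exact ⟨P + Q, fun α => by simp [hP α, hQ α]⟩
  | mul x y hx hy ihx ihy =>
    obtain ⟨P, hP⟩ := ihx
    obtain ⟨Q, hQ⟩ := ihy
    exact ⟨P * Q, fun α => by simp [hP α, hQ α]⟩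

/-- polynomial functions on `k` itself -/
lemma poly_self {k : Type*} [Field k] {q : k → k}
    (hq : q ∈ Algebra.adjoin k {g : k → k | IsLinearMap k g}) :
    ∃ Q : Polynomial k, ∀ a : k, q a = Polynomial.eval a Q := by
  induction hq using Algebra.adjoin_induction with
  | mem g hg =>
    refine ⟨Polynomial.C (g 1) * Polynomial.X, fun a => ?_⟩
    have : g a = a * g 1 := by
      have := hg.map_smul a 1
      simpa [smul_eq_mul] using this
    rw [this, Polynomial.eval_mul, Polynomial.eval_C, Polynomial.eval_X, mul_comm]
  | algebraMap r => exact ⟨Polynomial.C r, fun α => by simp [Algebra.algebraMap_eq_smul_one]⟩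
  | add x y hx hy ihx ihy =>
    obtain ⟨P, hP⟩ := ihx
    obtain ⟨Q, hQ⟩ := ihy
    exact ⟨P + Q, fun α => by simp [hP α, hQ α]⟩
  | mul x y hx hy ihx ihy =>
    obtain ⟨P, hP⟩ := ihx
    obtain ⟨Q, hQ⟩ := ihy
    exact ⟨P * Q, fun α => by simp [hP α, hQ α]⟩

/-- let a (connected algebraic) group `G` act on the Lie algebra `𝔫` by
Lie algebra automorphisms, let `𝔵, 𝔶 : k → 𝔫` be morphisms and `O ⊆ k` nonempty open
with `[𝔵(α), 𝔶(α)] = 0` for all `α` and `𝔵(α) ∈ G·𝔵(1)` for `α ∈ O`.  Then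
`(𝔵(0), 𝔶(0))` lies in the closure `ℭ(𝔵(1))` of `G·({𝔵(1)} × C_𝔫(𝔵(1)))`. -/
theorem mem_closure_orbit_centralizer (k L G : Type*) [Field k] [IsAlgClosed k]
    [LieRing L] [LieAlgebra k L] [Module.Finite k L]
    [Group G] [MulAction G L]
    (hlin : ∀ g : G, IsLinearMap k (fun y : L => g • y))
    (hbr : ∀ (g : G) (y z : L), g • ⁅y, z⁆ = ⁅g • y, g • z⁆)
    (X Y : k → L) (hX : IsPolyMap k L X) (hY : IsPolyMap k L Y)
    (O : Set k) (hO : O.Nonempty) (hOopen : @IsOpen _ (zariski k k) O)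
    (ha : ∀ α : k, ⁅X α, Y α⁆ = 0)
    (hb : ∀ α ∈ O, ∃ g : G, X α = g • X 1) :
    (X 0, Y 0) ∈ @closure _ (zariski k (L × L))
      {p : L × L | ∃ (g : G) (y : L), ⁅X 1, y⁆ = 0 ∧ p = (g • X 1, g • y)} := by
  letI : TopologicalSpace (L × L) := zariski k (L × L)
  rw [mem_closure_iff]
  intro U hUopen hvU
  obtain ⟨f, hf, hfv, hfU⟩ := zariski_basic hUopen _ hvU
  obtain ⟨P, hP⟩ := poly_comp X Y hX hY hf
  -- O contains a basic open around some α₀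
  obtain ⟨α₀, hα₀⟩ := hO
  obtain ⟨q, hq, hqα₀, hqO⟩ := zariski_basic hOopen _ hα₀
  obtain ⟨Q, hQ⟩ := poly_self hq
  have hPne : P ≠ 0 := fun h => hfv (by rw [show f (X 0, Y 0) = _ from hP 0, h, Polynomial.eval_zero])
  have hQne : Q ≠ 0 := fun h => hqα₀ (by rw [hQ α₀, h, Polynomial.eval_zero])
  have hmul : Q * P ≠ 0 := mul_ne_zero hQne hPne
  have : ∃ α : k, Polynomial.eval α (Q * P) ≠ 0 := by
    by_contra h
    push_neg at h
    exact hmul (Polynomial.zero_of_eval_zero _ h)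
  obtain ⟨α, hα⟩ := this
  rw [Polynomial.eval_mul] at hα
  have hαO : α ∈ O := hqO (by rw [Set.mem_setOf_eq, hQ α]; exact left_ne_zero_of_mul hα)
  obtain ⟨g, hg⟩ := hb α hαO
  refine ⟨(X α, Y α), hfU ?_, g, g⁻¹ • Y α, ?_, ?_⟩
  · rw [Set.mem_setOf_eq, hP α]; exact right_ne_zero_of_mul hα
  · have h0 : g • ⁅X 1, g⁻¹ • Y α⁆ = 0 := by
      rw [hbr, ← hg, smul_inv_smul, ha]
    have h1 := congrArg (fun z : L => g⁻¹ • z) h0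
    simpa [inv_smul_smul, (hlin g⁻¹).map_zero] using h1
  · rw [← hg, smul_inv_smul]
end

section
/- Let G be a connected algebraic group with Lie algebra 𝔤 and 𝔫 ⊆ 𝔤 a G-stable subalgebra. Let x ∈ 𝔫 and 𝔳 ⊆ 𝔫 a G-submodule with G·x ⊆ 𝔳. If ℭ(x) := closure of G·({x} × C_𝔫(x)) is an irreducible component of C₂(𝔫), then C_𝔫(x) ⊆ 𝔳. Consequently, if C_𝔫(𝔳) ⊄ 𝔳 then ℭ(x) is not an irreducible component of C₂(𝔫). -/
open Topology TopologicalSpace Set Polynomial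

section Aux

lemma zariski_isOpen_ne {k V : Type*} [Field k] [AddCommGroup V] [Module k V] {f : V → k}
    (hf : f ∈ Algebra.adjoin k {g : V → k | IsLinearMap k g}) :
    IsOpen[zariski k V] {v | f v ≠ 0} :=
  isOpen_generateFrom_of_mem ⟨f, hf, rfl⟩

variable {k : Type*} [Field k]

lemma adjoin_linear_eq_poly (f : k → k)
    (hf : f ∈ Algebra.adjoin k {g : k → k | IsLinearMap k g}) :
    ∃ p : Polynomial k, ∀ t, f t = p.eval t := by
  have hle : Algebra.adjoin k {g : k → k | IsLinearMap k g} ≤ (aeval (id : k → k)).range := by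
    apply Algebra.adjoin_le
    intro g hg
    refine ⟨C (g 1) * X, ?_⟩
    funext t
    have h1 : g t = g 1 * t := by
      have := hg.map_smul t 1
      simpa [smul_eq_mul, mul_comm] using this
    simp [Polynomial.aeval_fn_apply, h1]
  obtain ⟨p, hp⟩ := hle hf
  exact ⟨p, fun t => by rw [← hp]; simp [Polynomial.aeval_fn_apply]⟩

lemma zariski_open_k {s : Set k}
    (hs : TopologicalSpace.GenerateOpen
      {U | ∃ f ∈ Algebra.adjoin k {g : k → k | IsLinearMap k g}, U = {v | f v ≠ 0}} s) :
    s = ∅ ∨ sᶜ.Finite := by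
  induction hs with
  | basic u hu =>
    obtain ⟨f, hf, rfl⟩ := hu
    obtain ⟨p, hp⟩ := adjoin_linear_eq_poly f hf
    by_cases hpz : p = 0
    · left; ext t; simp [hp, hpz]
    · right
      have : {v : k | f v ≠ 0}ᶜ ⊆ {t | p.IsRoot t} := by
        intro t ht
        simp only [mem_compl_iff, mem_setOf_eq, not_not] at ht
        simpa [IsRoot, ← hp] using ht
      exact Set.Finite.subset (Set.not_infinite.mp
        (fun hi => hpz (p.eq_zero_of_infinite_isRoot hi))) this
  | univ => right; simp
  | inter u v _ _ ihu ihv =>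
    rcases ihu with h | h
    · left; simp [h]
    rcases ihv with h' | h'
    · left; simp [h']
    · right; rw [Set.compl_inter]; exact h.union h'
  | sUnion S _ ih =>
    by_cases h : ∀ u ∈ S, u = ∅
    · left; simpa using h
    · push_neg at h
      obtain ⟨u, hu, hune⟩ := h
      rcases ih u hu with h' | h'
      · exact absurd h' hune.ne_empty
      · right
        exact h'.subset (Set.compl_subset_compl.mpr (Set.subset_sUnion_of_mem hu))

lemma zariski_k_preirreducible [Infinite k] :
    @IsPreirreducible k (zariski k k) Set.univ := by
  intro u v hu hv ⟨a, _, ha⟩ ⟨b, _, hb⟩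
  rcases zariski_open_k (k := k) hu with h | h
  · exact absurd (h ▸ ha) (Set.notMem_empty a)
  rcases zariski_open_k (k := k) hv with h' | h'
  · exact absurd (h' ▸ hb) (Set.notMem_empty b)
  have : (uᶜ ∪ vᶜ) ≠ Set.univ := by
    intro heq
    have : (Set.univ : Set k).Finite := heq ▸ h.union h'
    exact Set.infinite_univ this
  obtain ⟨t, ht⟩ := Set.ne_univ_iff_exists_notMem _ |>.mp this
  simp only [Set.mem_union, Set.mem_compl_iff, not_or, not_not] at ht
  exact ⟨t, Set.mem_univ t, ht.1, ht.2⟩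

/-- `univ ×ˢ A` is preirreducible when the slice maps are continuous. -/
lemma preirr_prod {X Y : Type*} (tX : TopologicalSpace X) (tY : TopologicalSpace Y)
    (tP : TopologicalSpace (X × Y))
    (h1 : ∀ y₀ : Y, Continuous[tX, tP] (fun x => (x, y₀)))
    (h2 : ∀ x₀ : X, Continuous[tY, tP] (fun y => (x₀, y)))
    (hX : @IsPreirreducible X tX Set.univ) {A : Set Y} (hA : @IsPreirreducible Y tY A) :
    @IsPreirreducible (X × Y) tP (Set.univ ×ˢ A) := by
  rintro u v hu hv ⟨⟨a1, b1⟩, ⟨-, hb1⟩, hu1⟩ ⟨⟨a2, b2⟩, ⟨-, hb2⟩, hv2⟩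
  obtain ⟨a3, -, ha3u, ha3v⟩ := hX ((fun x => (x, b1)) ⁻¹' u) ((fun x => (x, b2)) ⁻¹' v)
    ((h1 b1).isOpen_preimage u hu) ((h1 b2).isOpen_preimage v hv)
    ⟨a1, Set.mem_univ a1, hu1⟩ ⟨a2, Set.mem_univ a2, hv2⟩
  obtain ⟨b3, hb3A, hb3u, hb3v⟩ := hA ((fun y => (a3, y)) ⁻¹' u) ((fun y => (a3, y)) ⁻¹' v)
    ((h2 a3).isOpen_preimage u hu) ((h2 a3).isOpen_preimage v hv)
    ⟨b1, hb1, ha3u⟩ ⟨b2, hb2, ha3v⟩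
  exact ⟨(a3, b3), ⟨Set.mem_univ a3, hb3A⟩, hb3u, hb3v⟩

/-- Submodules are Zariski closed. -/
lemma zariski_isClosed_submodule {V : Type*} [AddCommGroup V] [Module k V]
    (v : Submodule k V) : IsClosed[zariski k V] (v : Set V) := by
  letI := zariski k V
  rw [← isOpen_compl_iff]
  have heq : (↑v : Set V)ᶜ =
      ⋃ f ∈ {f : V →ₗ[k] k | ∀ y ∈ v, f y = 0}, {z | f z ≠ 0} := by
    ext z
    simp only [Set.mem_compl_iff, SetLike.mem_coe, Set.mem_iUnion, Set.mem_setOf_eq]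
    constructor
    · intro hz
      have hmk : (Submodule.Quotient.mk z : V ⧸ v) ≠ 0 := by
        simpa [Submodule.Quotient.mk_eq_zero] using hz
      obtain ⟨f', hf'⟩ : ∃ f' : Module.Dual k (V ⧸ v), f' (Submodule.Quotient.mk z) ≠ 0 := by
        by_contra h
        push_neg at h
        exact hmk ((Module.forall_dual_apply_eq_zero_iff k _).mp h)
      exact ⟨f'.comp v.mkQ, fun y hy => by simp [Submodule.mkQ_apply,
        (Submodule.Quotient.mk_eq_zero v).mpr hy], by simpa using hf'⟩
    · rintro ⟨f, hfv, hfz⟩ hz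
      exact hfz (hfv z hz)
  rw [heq]
  exact isOpen_biUnion fun f hf => zariski_isOpen_ne (Algebra.subset_adjoin f.isLinear)

variable {L : Type*} [LieRing L] [LieAlgebra k L]

lemma commSet_isClosed [Module.Finite k L] : IsClosed[zariski k (L × L)] (commSet L) := by
  letI := zariski k (L × L)
  classical
  let b := Module.finBasis k L
  have heq : commSet L = ⋂ i, {p : L × L | (fun q : L × L => b.coord i ⁅q.1, q.2⁆) p ≠ 0}ᶜ := by
    ext p
    simp only [commSet, Set.mem_setOf_eq, Set.mem_iInter, Set.mem_compl_iff, not_not]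
    exact (b.forall_coord_eq_zero_iff).symm
  rw [heq]
  refine isClosed_iInter fun i => (zariski_isOpen_ne ?_).isClosed_compl
  have hfun : (fun q : L × L => b.coord i ⁅q.1, q.2⁆) =
      ∑ j, (fun q : L × L => b.coord j q.1) * (fun q : L × L => b.coord i ⁅b j, q.2⁆) := by
    funext q
    let T : L →ₗ[k] k :=
      { toFun := fun a => b.coord i ⁅a, q.2⁆,
        map_add' := fun a c => by
          show b.coord i ⁅a + c, q.2⁆ = b.coord i ⁅a, q.2⁆ + b.coord i ⁅c, q.2⁆
          rw [add_lie, map_add],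
        map_smul' := fun c a => by
          show b.coord i ⁅c • a, q.2⁆ = c • b.coord i ⁅a, q.2⁆
          rw [smul_lie, map_smul] }
    show T q.1 = _
    conv_lhs => rw [← b.sum_repr q.1]
    rw [map_sum]
    simp [T, smul_eq_mul, Module.Basis.coord_apply]
  rw [hfun]
  refine Subalgebra.sum_mem _ fun j _ => Subalgebra.mul_mem _ ?_ ?_
  · exact Algebra.subset_adjoin ⟨fun a c => by simp, fun c a => by simp⟩
  · exact Algebra.subset_adjoin ⟨fun a c => by simp, fun c a => by simp⟩

/-- The shear map `(t, (a, b)) ↦ (a + t b, b)` is continuous. -/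
lemma shear_continuous :
    Continuous[zariski k (k × (L × L)), zariski k (L × L)]
      (fun w : k × (L × L) => (w.2.1 + w.1 • w.2.2, w.2.2)) := by
  letI := zariski k (k × (L × L))
  rw [zariski, zariski, continuous_generateFrom_iff]
  rintro s ⟨f, hf, rfl⟩
  show IsOpen {w : k × (L × L) | f (w.2.1 + w.1 • w.2.2, w.2.2) ≠ 0}
  set Φ : ((L × L) → k) →ₐ[k] ((k × (L × L)) → k) :=
    { toFun := fun f => fun w => f (w.2.1 + w.1 • w.2.2, w.2.2),
      map_one' := rfl, map_mul' := fun _ _ => rfl, map_zero' := rfl,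
      map_add' := fun _ _ => rfl, commutes' := fun _ => rfl } with hΦ
  have key : Φ f ∈ Algebra.adjoin k {g : k × (L × L) → k | IsLinearMap k g} := by
    refine Algebra.adjoin_le (R := k)
      (S := (Algebra.adjoin k {g : k × (L × L) → k | IsLinearMap k g}).comap Φ) ?_ hf
    intro g hg
    have hgφ : Φ g = (fun w : k × (L × L) => g w.2) +
        (fun w : k × (L × L) => w.1) * (fun w : k × (L × L) => g (w.2.2, 0)) := by
      funext w
      have : (w.2.1 + w.1 • w.2.2, w.2.2) = w.2 + w.1 • ((w.2.2, 0) : L × L) := by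
        simp [Prod.ext_iff]
      show g _ = g w.2 + w.1 * g (w.2.2, 0)
      rw [this, hg.map_add, hg.map_smul, smul_eq_mul]
    show Φ g ∈ Algebra.adjoin k {g : k × (L × L) → k | IsLinearMap k g}
    rw [hgφ]
    refine Subalgebra.add_mem _ (Algebra.subset_adjoin ⟨fun a c => by simp [hg.map_add],
      fun c a => by simp [hg.map_smul]⟩) (Subalgebra.mul_mem _
      (Algebra.subset_adjoin ⟨fun a c => by simp, fun c a => by simp⟩)
      (Algebra.subset_adjoin ⟨fun a c => ?_, fun c a => ?_⟩))
    · show g ((a + c).2.2, 0) = g (a.2.2, 0) + g (c.2.2, 0)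
      rw [← hg.map_add]; simp
    · show g ((c • a).2.2, 0) = c * g (a.2.2, 0)
      rw [← smul_eq_mul, ← hg.map_smul]; simp [Prod.ext_iff]
  exact zariski_isOpen_ne key

/-- slice maps into the product are continuous -/
lemma slice1_continuous (m₀ : L × L) :
    Continuous[zariski k k, zariski k (k × (L × L))] (fun t : k => (t, m₀)) := by
  letI := zariski k k
  rw [zariski, zariski, continuous_generateFrom_iff]
  rintro s ⟨f, hf, rfl⟩
  show IsOpen {t : k | f (t, m₀) ≠ 0}
  set Φ : ((k × (L × L)) → k) →ₐ[k] (k → k) :=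
    { toFun := fun f => fun t => f (t, m₀),
      map_one' := rfl, map_mul' := fun _ _ => rfl, map_zero' := rfl,
      map_add' := fun _ _ => rfl, commutes' := fun _ => rfl } with hΦ
  refine zariski_isOpen_ne (f := Φ f) (Algebra.adjoin_le (R := k)
    (S := (Algebra.adjoin k {g : k → k | IsLinearMap k g}).comap Φ) ?_ hf)
  intro g hg
  have hgφ : Φ g = (fun t : k => g (t, 0)) + (algebraMap k (k → k)) (g (0, m₀)) := by
    funext t
    have : ((t, m₀) : k × (L × L)) = (t, 0) + (0, m₀) := by simp
    show g _ = g (t, 0) + g (0, m₀)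
    rw [this, hg.map_add]
  show Φ g ∈ Algebra.adjoin k {g : k → k | IsLinearMap k g}
  rw [hgφ]
  refine Subalgebra.add_mem _ (Algebra.subset_adjoin ⟨fun a c => ?_, fun c a => ?_⟩)
    (Subalgebra.algebraMap_mem _ _)
  · show g ((a + c : k), (0 : L × L)) = g (a, 0) + g (c, 0)
    rw [← hg.map_add]; simp
  · show g ((c • a : k), (0 : L × L)) = c * g (a, 0)
    have h2 : ((c • a, (0 : L × L)) : k × (L × L)) = c • ((a, 0) : k × (L × L)) := by
      simp [Prod.ext_iff]
    rw [h2, hg.map_smul, smul_eq_mul]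

lemma slice2_continuous (t₀ : k) :
    Continuous[zariski k (L × L), zariski k (k × (L × L))] (fun m : L × L => (t₀, m)) := by
  letI := zariski k (L × L)
  rw [zariski, zariski, continuous_generateFrom_iff]
  rintro s ⟨f, hf, rfl⟩
  show IsOpen {m : L × L | f (t₀, m) ≠ 0}
  set Φ : ((k × (L × L)) → k) →ₐ[k] ((L × L) → k) :=
    { toFun := fun f => fun m => f (t₀, m),
      map_one' := rfl, map_mul' := fun _ _ => rfl, map_zero' := rfl,
      map_add' := fun _ _ => rfl, commutes' := fun _ => rfl } with hΦ
  refine zariski_isOpen_ne (f := Φ f) (Algebra.adjoin_le (R := k)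
    (S := (Algebra.adjoin k {g : (L × L) → k | IsLinearMap k g}).comap Φ) ?_ hf)
  intro g hg
  have hgφ : Φ g = (fun m : L × L => g (0, m)) + (algebraMap k ((L × L) → k)) (g (t₀, 0)) := by
    funext m
    have : ((t₀, m) : k × (L × L)) = (0, m) + (t₀, 0) := by simp
    show g _ = g (0, m) + g (t₀, 0)
    rw [this, hg.map_add]
  show Φ g ∈ Algebra.adjoin k {g : (L × L) → k | IsLinearMap k g}
  rw [hgφ]
  refine Subalgebra.add_mem _ (Algebra.subset_adjoin ⟨fun a c => ?_, fun c a => ?_⟩)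
    (Subalgebra.algebraMap_mem _ _)
  · show g ((0 : k), a + c) = g (0, a) + g (0, c)
    rw [← hg.map_add]; simp
  · show g ((0 : k), c • a) = c * g (0, a)
    have h2 : (((0 : k), c • a) : k × (L × L)) = c • (((0 : k), a) : k × (L × L)) := by
      simp [Prod.ext_iff]
    rw [h2, hg.map_smul, smul_eq_mul]

lemma fst_continuous :
    Continuous[zariski k (L × L), zariski k L] (Prod.fst : L × L → L) := by
  letI := zariski k (L × L)
  rw [zariski, zariski, continuous_generateFrom_iff]
  rintro s ⟨f, hf, rfl⟩
  show IsOpen {m : L × L | f m.1 ≠ 0}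
  set Φ : (L → k) →ₐ[k] ((L × L) → k) :=
    { toFun := fun f => fun m => f m.1,
      map_one' := rfl, map_mul' := fun _ _ => rfl, map_zero' := rfl,
      map_add' := fun _ _ => rfl, commutes' := fun _ => rfl } with hΦ
  refine zariski_isOpen_ne (f := Φ f) (Algebra.adjoin_le (R := k)
    (S := (Algebra.adjoin k {g : (L × L) → k | IsLinearMap k g}).comap Φ) ?_ hf)
  intro g hg
  refine Algebra.subset_adjoin ⟨fun a c => ?_, fun c a => ?_⟩
  · show g (a + c).1 = g a.1 + g c.1
    rw [Prod.fst_add, hg.map_add]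
  · show g (c • a).1 = c • g a.1
    rw [Prod.smul_fst, hg.map_smul]

end Aux

/-- let a (connected algebraic) group `G` act on the Lie algebra `𝔫` by
Lie algebra automorphisms, `x ∈ 𝔫`, and `𝔳 ⊆ 𝔫` a `G`-submodule with `G·x ⊆ 𝔳`.
If `ℭ(x)`, the closure of `G·({x} × C_𝔫(x))`, is an irreducible component of `C₂(𝔫)`,
then `C_𝔫(x) ⊆ 𝔳`; consequently, if `C_𝔫(𝔳) ⊄ 𝔳` then `ℭ(x)` is not an irreducible
component of `C₂(𝔫)`. -/
theorem centralizer_subset_of_irrComp (k L G : Type*) [Field k] [IsAlgClosed k]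
    [LieRing L] [LieAlgebra k L] [Module.Finite k L]
    [Group G] [MulAction G L]
    (hlin : ∀ g : G, IsLinearMap k (fun y : L => g • y))
    (hbr : ∀ (g : G) (y z : L), g • ⁅y, z⁆ = ⁅g • y, g • z⁆)
    (x : L) (v : Submodule k L)
    (hstab : ∀ (g : G), ∀ y ∈ v, g • y ∈ v)
    (horb : ∀ g : G, g • x ∈ v) :
    (IsIrrCompIn (zariski k (L × L)) (commSet L)
        (@closure _ (zariski k (L × L))
          {p : L × L | ∃ (g : G) (y : L), ⁅x, y⁆ = 0 ∧ p = (g • x, g • y)}) →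
      {y : L | ⁅x, y⁆ = 0} ⊆ (v : Set L)) ∧
    ((¬ {y : L | ∀ z ∈ v, ⁅y, z⁆ = 0} ⊆ (v : Set L)) →
      ¬ IsIrrCompIn (zariski k (L × L)) (commSet L)
        (@closure _ (zariski k (L × L))
          {p : L × L | ∃ (g : G) (y : L), ⁅x, y⁆ = 0 ∧ p = (g • x, g • y)})) := by
  classical
  letI : TopologicalSpace (L × L) := zariski k (L × L)
  letI : TopologicalSpace (k × (L × L)) := zariski k (k × (L × L))
  letI : TopologicalSpace L := zariski k L
  set S : Set (L × L) := {p : L × L | ∃ (g : G) (y : L), ⁅x, y⁆ = 0 ∧ p = (g • x, g • y)}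
    with hS
  set ψ : k × (L × L) → L × L := fun w => (w.2.1 + w.1 • w.2.2, w.2.2) with hψ
  have hxv : x ∈ v := by simpa using horb 1
  have main : IsIrrCompIn (zariski k (L × L)) (commSet L) (closure S) →
      {y : L | ⁅x, y⁆ = 0} ⊆ (v : Set L) := by
    rintro ⟨hCZ, hirr, hmax⟩ y hy
    have hy' : ⁅x, y⁆ = 0 := hy
    -- the enlarged irreducible set
    set D : Set (L × L) := closure (ψ '' (Set.univ ×ˢ closure S)) with hD
    have hSsub : S ⊆ ψ '' (Set.univ ×ˢ closure S) := by
      intro p hp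
      exact ⟨(0, p), ⟨Set.mem_univ _, subset_closure hp⟩, by simp [hψ]⟩
    have hCD : closure S ⊆ D := closure_mono hSsub
    have himg : ψ '' (Set.univ ×ˢ closure S) ⊆ commSet L := by
      rintro _ ⟨⟨t, p⟩, ⟨-, hp⟩, rfl⟩
      have hpc : ⁅p.1, p.2⁆ = 0 := hCZ hp
      show ⁅p.1 + t • p.2, p.2⁆ = 0
      rw [add_lie, smul_lie, hpc, lie_self, smul_zero, add_zero]
    have hDZ : D ⊆ commSet L := closure_minimal himg commSet_isClosed
    have hpre : IsPreirreducible (Set.univ ×ˢ closure S : Set (k × (L × L))) :=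
      preirr_prod (zariski k k) (zariski k (L × L)) (zariski k (k × (L × L)))
        (fun m₀ => slice1_continuous m₀) (fun t₀ => slice2_continuous t₀)
        zariski_k_preirreducible hirr.2
    have hne : (Set.univ ×ˢ closure S : Set (k × (L × L))).Nonempty := by
      obtain ⟨c, hc⟩ := hirr.1
      exact ⟨(0, c), Set.mem_univ _, hc⟩
    have hDirr : IsIrreducible D :=
      (IsIrreducible.image ⟨hne, hpre⟩ ψ shear_continuous.continuousOn).closure
    have heqD : closure S = D := hmax D hDZ hDirr hCD
    -- (x + y, y) belongs to the component
    have hxyS : ((x, y) : L × L) ∈ S := ⟨1, y, hy', by rw [one_smul, one_smul]⟩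
    have hmem : ((x + y, y) : L × L) ∈ closure S := by
      rw [heqD]
      refine subset_closure ⟨(1, (x, y)), ⟨Set.mem_univ _, subset_closure hxyS⟩, ?_⟩
      simp [hψ]
    -- project to the first factor
    have hfst : x + y ∈ closure (Prod.fst '' S) := by
      have himcl : Prod.fst '' closure S ⊆ closure (Prod.fst '' S) :=
        image_closure_subset_closure_image fst_continuous
      exact himcl ⟨(x + y, y), hmem, rfl⟩
    have hfstv : Prod.fst '' S ⊆ (v : Set L) := by
      rintro _ ⟨p, ⟨g, y', hy', rfl⟩, rfl⟩
      exact horb g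
    have hxyv : x + y ∈ v := closure_minimal hfstv (zariski_isClosed_submodule v) hfst
    have := v.sub_mem hxyv hxv
    simpa using this
  refine ⟨main, fun hns hcomp => hns fun y hy => main hcomp ?_⟩
  have : ⁅y, x⁆ = 0 := hy x hxv
  rw [Set.mem_setOf_eq, ← neg_eq_zero, ← lie_skew, this, neg_neg]
end
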